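/- arXiv:2512.11428 — 3 statements merged into one kernel-verified Lean document; each statement's English description precedes it below -/
import Mathlib

section
/- For a ∈ (0,1), define n_a(s) = (1/(√s + 1)) · sinh(a√s)/sinh(√s) and d_a(s) = (√s/(√s + 1)) · sinh(a√s)/cosh(a√s) for s in the right half-plane ℂ₊ = {s : Re s > 0}, where √s is the principal branch. Then n_a and d_a are bounded holomorphic functions on ℂ₊. -/
/-!
For `Re s > 0` the principal square root `z = √s` lies in the sector `|Im z| < Re z`, where the
formulas `|sinh w|² = sinh² (Re w) + sin² (Im w)` and `|cosh w|² = sinh² (Re w) + cos² (Im w)`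
show that `sinh z` and `cosh (a z)` do not vanish and control the numerators: since
`sin² (a Im z) ≤ (Im z)² ≤ (Re z)² ≤ sinh² (Re z)`, we get `|sinh (a z)| ≤ √2 |sinh z|`,
and `|sinh w| ≤ √5 |cosh w|` on the sector. The rational factors `1 / (z + 1)` and
`z / (z + 1)` have modulus at most `1` when `Re z ≥ 0`.
-/

namespace Real

theorem sq_le_sinh_sq (x : ℝ) : x ^ 2 ≤ sinh x ^ 2 := by
  rw [← sq_abs, ← sq_abs (sinh x), abs_sinh]
  exact pow_le_pow_left₀ (abs_nonneg x) (self_le_sinh_iff.2 (abs_nonneg x)) 2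

theorem sinh_mul_sq_le_sinh_sq {a : ℝ} (ha : |a| ≤ 1) (x : ℝ) :
    sinh (a * x) ^ 2 ≤ sinh x ^ 2 := by
  have hcosh : cosh (a * x) ≤ cosh x := by
    rw [cosh_le_cosh, abs_mul]
    exact mul_le_of_le_one_left (abs_nonneg x) ha
  rw [sinh_sq, sinh_sq]
  gcongr

end Real

namespace Complex

theorem normSq_sinh (w : ℂ) : normSq (sinh w) = Real.sinh w.re ^ 2 + Real.sin w.im ^ 2 := by
  have h : sinh w = (Real.sinh w.re * Real.cos w.im : ℝ) +
      (Real.cosh w.re * Real.sin w.im : ℝ) * I := by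
    conv_lhs => rw [← re_add_im w]
    rw [sinh_add, sinh_mul_I, cosh_mul_I]
    push_cast
    ring
  rw [h, normSq_add_mul_I]
  linear_combination Real.sinh w.re ^ 2 * Real.sin_sq_add_cos_sq w.im +
    Real.sin w.im ^ 2 * Real.cosh_sq w.re

theorem normSq_cosh (w : ℂ) : normSq (cosh w) = Real.sinh w.re ^ 2 + Real.cos w.im ^ 2 := by
  have h : cosh w = (Real.cosh w.re * Real.cos w.im : ℝ) +
      (Real.sinh w.re * Real.sin w.im : ℝ) * I := by
    conv_lhs => rw [← re_add_im w]
    rw [cosh_add, sinh_mul_I, cosh_mul_I]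
    push_cast
    ring
  rw [h, normSq_add_mul_I]
  linear_combination Real.sinh w.re ^ 2 * Real.sin_sq_add_cos_sq w.im +
    Real.cos w.im ^ 2 * Real.cosh_sq w.re

theorem sinh_ne_zero_of_re_ne_zero {w : ℂ} (hw : w.re ≠ 0) : sinh w ≠ 0 := by
  rw [← normSq_pos, normSq_sinh]
  have := Real.sinh_ne_zero.2 hw
  positivity

theorem cosh_ne_zero_of_re_ne_zero {w : ℂ} (hw : w.re ≠ 0) : cosh w ≠ 0 := by
  rw [← normSq_pos, normSq_cosh]
  have := Real.sinh_ne_zero.2 hw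
  positivity

theorem norm_div_le_sqrt_of_normSq_le {u v : ℂ} {c : ℝ} (h : normSq u ≤ c * normSq v) :
    ‖u / v‖ ≤ √c := by
  rw [norm_div]
  refine div_le_of_le_mul₀ (norm_nonneg _) (Real.sqrt_nonneg _) ?_
  rw [norm_def, norm_def, ← Real.sqrt_mul' _ (normSq_nonneg v)]
  exact Real.sqrt_le_sqrt h

theorem norm_sinh_ofReal_mul_div_sinh_le {a : ℝ} (ha : |a| ≤ 1) {w : ℂ} (hw : |w.im| ≤ |w.re|) :
    ‖sinh (a * w) / sinh w‖ ≤ √2 := by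
  refine norm_div_le_sqrt_of_normSq_le ?_
  rw [normSq_sinh, normSq_sinh, re_ofReal_mul, im_ofReal_mul]
  have him : (a * w.im) ^ 2 ≤ w.re ^ 2 := by
    rw [← sq_abs, ← sq_abs w.re, abs_mul]
    gcongr
    exact mul_le_of_le_one_left (abs_nonneg _) ha |>.trans hw
  nlinarith [Real.sinh_mul_sq_le_sinh_sq ha w.re, Real.sin_sq_le_sq (x := a * w.im),
    Real.sq_le_sinh_sq w.re, sq_nonneg (Real.sin w.im)]

/-- Near the real axis `cos (Im w)` stays away from `0`; away from it `|Re w| ≥ |Im w|` is large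
enough for `sinh² (Re w)` to dominate `sin² (Im w) ≤ 1`. -/
theorem norm_sinh_div_cosh_le {w : ℂ} (hw : |w.im| ≤ |w.re|) : ‖sinh w / cosh w‖ ≤ √5 := by
  refine norm_div_le_sqrt_of_normSq_le ?_
  rw [normSq_sinh, normSq_cosh]
  have hsin_cos := Real.sin_sq_add_cos_sq w.im
  rcases le_total (w.im ^ 2) (1 / 4) with hsmall | hlarge
  · nlinarith [Real.sin_sq_le_sq (x := w.im), sq_nonneg (Real.sinh w.re)]
  · have hre : w.im ^ 2 ≤ w.re ^ 2 := sq_le_sq.2 hw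
    nlinarith [Real.sq_le_sinh_sq w.re, Real.sin_sq_le_one w.im, sq_nonneg (Real.cos w.im)]

theorem normSq_le_normSq_add_one {z : ℂ} (hz : 0 ≤ z.re) : normSq z ≤ normSq (z + 1) := by
  simp only [normSq_apply, add_re, add_im, one_re, one_im]
  nlinarith

theorem norm_one_div_add_one_le_one {z : ℂ} (hz : 0 ≤ z.re) : ‖1 / (z + 1)‖ ≤ 1 := by
  rw [← Real.sqrt_one]
  refine norm_div_le_sqrt_of_normSq_le ?_
  simp only [map_one, one_mul, normSq_apply, add_re, add_im, one_re, one_im]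
  nlinarith

theorem norm_div_add_one_le_one {z : ℂ} (hz : 0 ≤ z.re) : ‖z / (z + 1)‖ ≤ 1 := by
  rw [← Real.sqrt_one]
  exact norm_div_le_sqrt_of_normSq_le ((normSq_le_normSq_add_one hz).trans_eq (one_mul _).symm)

theorem add_one_ne_zero_of_re_nonneg {z : ℂ} (hz : 0 ≤ z.re) : z + 1 ≠ 0 := fun h => by
  have := congrArg re h
  simp only [add_re, one_re, zero_re] at this
  linarith

theorem abs_im_ofReal_mul_le_abs_re (a : ℝ) {w : ℂ} (hw : |w.im| ≤ |w.re|) :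
    |((a : ℂ) * w).im| ≤ |((a : ℂ) * w).re| := by
  rw [re_ofReal_mul, im_ofReal_mul, abs_mul, abs_mul]
  exact mul_le_mul_of_nonneg_left hw (abs_nonneg a)

theorem abs_im_cpow_half_lt_re {s : ℂ} (hs : 0 < s.re) :
    |(s ^ (1 / 2 : ℂ)).im| < (s ^ (1 / 2 : ℂ)).re := by
  rw [one_div, abs_cpow_inv_two_im, cpow_inv_two_re]
  refine Real.sqrt_lt_sqrt ?_ (by linarith)
  linarith [re_le_norm s]

end Complex

open Complex

theorem na_da_bounded_holomorphic (a : ℝ) (ha : a ∈ Set.Ioo (0:ℝ) 1) :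
    (DifferentiableOn ℂ
        (fun s : ℂ => (1 / (s ^ ((1:ℂ)/2) + 1)) *
          (Complex.sinh ((a : ℂ) * s ^ ((1:ℂ)/2)) / Complex.sinh (s ^ ((1:ℂ)/2))))
        {s : ℂ | 0 < s.re} ∧
      ∃ M, ∀ s : ℂ, 0 < s.re →
        ‖(1 / (s ^ ((1:ℂ)/2) + 1)) *
          (Complex.sinh ((a : ℂ) * s ^ ((1:ℂ)/2)) / Complex.sinh (s ^ ((1:ℂ)/2)))‖ ≤ M) ∧
    (DifferentiableOn ℂ
        (fun s : ℂ => (s ^ ((1:ℂ)/2) / (s ^ ((1:ℂ)/2) + 1)) *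
          (Complex.sinh ((a : ℂ) * s ^ ((1:ℂ)/2)) / Complex.cosh ((a : ℂ) * s ^ ((1:ℂ)/2))))
        {s : ℂ | 0 < s.re} ∧
      ∃ M, ∀ s : ℂ, 0 < s.re →
        ‖(s ^ ((1:ℂ)/2) / (s ^ ((1:ℂ)/2) + 1)) *
          (Complex.sinh ((a : ℂ) * s ^ ((1:ℂ)/2)) / Complex.cosh ((a : ℂ) * s ^ ((1:ℂ)/2)))‖ ≤ M) := by
  obtain ⟨ha_pos, ha_lt_one⟩ := ha
  have ha_abs : |a| ≤ 1 := abs_le.2 ⟨by linarith, ha_lt_one.le⟩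
  have hre_pos (s : ℂ) (hs : 0 < s.re) : 0 < (s ^ (1 / 2 : ℂ)).re :=
    (abs_nonneg _).trans_lt (abs_im_cpow_half_lt_re hs)
  have hsector (s : ℂ) (hs : 0 < s.re) : |(s ^ (1 / 2 : ℂ)).im| ≤ |(s ^ (1 / 2 : ℂ)).re| :=
    (abs_im_cpow_half_lt_re hs).le.trans (le_abs_self _)
  refine ⟨⟨fun s hs => ?_, √2, fun s hs => ?_⟩, fun s hs => ?_, √5, fun s hs => ?_⟩
  · have hslit : s ∈ slitPlane := Or.inl hs
    have hden := add_one_ne_zero_of_re_nonneg (hre_pos s hs).le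
    have hsinh := sinh_ne_zero_of_re_ne_zero (hre_pos s hs).ne'
    exact (by fun_prop (disch := assumption) : DifferentiableAt ℂ _ s).differentiableWithinAt
  · exact (norm_mul_le_of_le (norm_one_div_add_one_le_one (hre_pos s hs).le)
      (norm_sinh_ofReal_mul_div_sinh_le ha_abs (hsector s hs))).trans_eq (one_mul _)
  · have hslit : s ∈ slitPlane := Or.inl hs
    have hden := add_one_ne_zero_of_re_nonneg (hre_pos s hs).le
    have hcosh : cosh (a * s ^ (1 / 2 : ℂ)) ≠ 0 :=
      cosh_ne_zero_of_re_ne_zero (by rw [re_ofReal_mul]; exact (mul_pos ha_pos (hre_pos s hs)).ne')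
    exact (by fun_prop (disch := assumption) : DifferentiableAt ℂ _ s).differentiableWithinAt
  · exact (norm_mul_le_of_le (norm_div_add_one_le_one (hre_pos s hs).le)
      (norm_sinh_div_cosh_le (abs_im_ofReal_mul_le_abs_re a (hsector s hs)))).trans_eq (one_mul _)
end

section
/- For a ∈ (0,1), there exists δ > 0 such that |n_a(s)|² + |d_a(s)|² ≥ δ for all s in the right half-plane ℂ₊, where n_a(s) = (1/(√s+1))·sinh(a√s)/sinh(√s) and d_a(s) = (√s/(√s+1))·tanh(a√s). -/
/-!
Put `w = √s`, which ranges over the open sector `|Im w| < Re w`. Far out in the sector, for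
`Re w ≥ 1/a + 1`, the `d_a` term is bounded below because `‖w / (w + 1)‖ ≥ 1/2` and
`‖tanh (a w)‖ ≥ tanh (Re (a w)) ≥ tanh 1`. The rest of the closed sector is compact, and there the
`n_a` term, with its removable singularity at `w = 0` filled in by the value `a`, is continuous and
has no zeros (`sinh` does not vanish on `Re z > 0`), so it is bounded below as well.
-/

open Complex Set

lemma Differentiable.continuous_dslope {𝕜 E : Type*} [NontriviallyNormedField 𝕜]
    [NormedAddCommGroup E] [NormedSpace 𝕜 E] {f : 𝕜 → E} (hf : Differentiable 𝕜 f) (a : 𝕜) :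
    Continuous (dslope f a) :=
  continuousOn_univ.1 ((continuousOn_dslope Filter.univ_mem).2 ⟨hf.continuous.continuousOn, hf a⟩)

namespace Real

lemma tanh_le_tanh {x y : ℝ} (h : x ≤ y) : tanh x ≤ tanh y := by
  rwa [← artanh_le_artanh_iff ⟨neg_one_lt_tanh x, tanh_lt_one x⟩
    ⟨neg_one_lt_tanh y, tanh_lt_one y⟩, artanh_tanh, artanh_tanh]

lemma tanh_pos {x : ℝ} (hx : 0 < x) : 0 < tanh x := by
  rw [tanh_eq_sinh_div_cosh]
  exact div_pos (sinh_pos_iff.2 hx) (cosh_pos x)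

end Real

namespace Complex

lemma sinh_re_le_norm_sinh (z : ℂ) : Real.sinh z.re ≤ ‖sinh z‖ := by
  calc Real.sinh z.re = (‖exp z‖ - ‖exp (-z)‖) / 2 := by simp [Real.sinh_eq, norm_exp]
    _ ≤ ‖exp z - exp (-z)‖ / 2 := by gcongr; exact norm_sub_norm_le _ _
    _ = ‖sinh z‖ := by rw [sinh, norm_div, RCLike.norm_ofNat]

lemma sinh_re_le_norm_cosh (z : ℂ) : Real.sinh z.re ≤ ‖cosh z‖ := by
  calc Real.sinh z.re = (‖exp z‖ - ‖-exp (-z)‖) / 2 := by simp [Real.sinh_eq, norm_exp]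
    _ ≤ ‖exp z - -exp (-z)‖ / 2 := by gcongr; exact norm_sub_norm_le _ _
    _ = ‖cosh z‖ := by rw [cosh, sub_neg_eq_add, norm_div, RCLike.norm_ofNat]

lemma norm_cosh_le_cosh_re (z : ℂ) : ‖cosh z‖ ≤ Real.cosh z.re := by
  calc ‖cosh z‖ = ‖exp z + exp (-z)‖ / 2 := by rw [cosh, norm_div, RCLike.norm_ofNat]
    _ ≤ (‖exp z‖ + ‖exp (-z)‖) / 2 := by gcongr; exact norm_add_le _ _
    _ = Real.cosh z.re := by simp [Real.cosh_eq, norm_exp]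

lemma sinh_ne_zero_of_re_pos {z : ℂ} (hz : 0 < z.re) : sinh z ≠ 0 :=
  norm_pos_iff.1 ((Real.sinh_pos_iff.2 hz).trans_le (sinh_re_le_norm_sinh z))

lemma tanh_re_le_norm_tanh {z : ℂ} (hz : 0 < z.re) : Real.tanh z.re ≤ ‖tanh z‖ := by
  rw [Real.tanh_eq_sinh_div_cosh, tanh_eq_sinh_div_cosh, norm_div]
  have hcosh : 0 < ‖cosh z‖ := (Real.sinh_pos_iff.2 hz).trans_le (sinh_re_le_norm_cosh z)
  calc Real.sinh z.re / Real.cosh z.re ≤ ‖sinh z‖ / Real.cosh z.re := by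
        gcongr; exact sinh_re_le_norm_sinh z
    _ ≤ ‖sinh z‖ / ‖cosh z‖ := by gcongr; exact norm_cosh_le_cosh_re z

lemma abs_im_cpow_inv_two_lt_re {s : ℂ} (hs : 0 < s.re) :
    |(s ^ (2⁻¹ : ℂ)).im| < (s ^ (2⁻¹ : ℂ)).re := by
  rw [cpow_inv_two_re, abs_cpow_inv_two_im]
  exact Real.sqrt_lt_sqrt (by linarith [re_le_norm s]) (by linarith)

lemma re_pos_of_abs_im_le_re {w : ℂ} (h : |w.im| ≤ w.re) (hw : w ≠ 0) : 0 < w.re := by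
  refine (abs_nonneg _ |>.trans h).lt_of_ne fun hre => hw (ext hre.symm ?_)
  simpa [← hre] using h

lemma isCompact_setOf_abs_im_le_re_le (R : ℝ) :
    IsCompact {w : ℂ | |w.im| ≤ w.re ∧ w.re ≤ R} := by
  have hbox : IsCompact (Icc 0 R ×ℂ Icc (-R) R) := isCompact_Icc.reProdIm isCompact_Icc
  refine hbox.of_isClosed_subset ?_ ?_
  · rw [ofPred_and]
    exact (isClosed_le (by fun_prop) (by fun_prop)).inter (isClosed_le (by fun_prop) (by fun_prop))
  · rintro w ⟨him, hre⟩
    exact ⟨⟨(abs_nonneg _).trans him, hre⟩, abs_le.1 (him.trans hre)⟩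

end Complex

noncomputable section

/-- `n_a` and `d_a` in the variable `w = √s`. -/
def numFactor (a : ℝ) (w : ℂ) : ℂ := 1 / (w + 1) * (sinh (a * w) / sinh w)

def denFactor (a : ℝ) (w : ℂ) : ℂ := w / (w + 1) * tanh (a * w)

/-- `sinh (c w) / sinh w` with its removable singularity at `0` filled in (the plain quotient is
`0` there). -/
def sinhRatio (c w : ℂ) : ℂ := dslope (fun z => sinh (c * z)) 0 w / dslope sinh 0 w

lemma sinhRatio_of_ne_zero (c : ℂ) {w : ℂ} (hw : w ≠ 0) :
    sinhRatio c w = sinh (c * w) / sinh w := by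
  simp [sinhRatio, dslope_of_ne _ hw, slope_def_field, div_div_div_cancel_right₀ hw]

lemma sinhRatio_zero (c : ℂ) : sinhRatio c 0 = c := by
  have hderiv := (((hasDerivAt_id' (0 : ℂ)).const_mul c).csinh).deriv
  simp [sinhRatio, dslope_same, hderiv]

lemma continuousAt_sinhRatio (c : ℂ) {w : ℂ} (hw : w = 0 ∨ sinh w ≠ 0) :
    ContinuousAt (sinhRatio c) w := by
  have hnum : Differentiable ℂ fun z => sinh (c * z) := by fun_prop
  refine (hnum.continuous_dslope 0).continuousAt.div
    (differentiable_sinh.continuous_dslope 0).continuousAt ?_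
  rcases hw with rfl | hw
  · simp [dslope_same]
  · have hw0 : w ≠ 0 := by rintro rfl; simp at hw
    simpa [dslope_of_ne _ hw0, slope_def_field, hw0] using hw

lemma exists_pos_le_norm_numFactor {a : ℝ} (ha : 0 < a) (R : ℝ) :
    ∃ c > 0, ∀ w : ℂ, |w.im| < w.re → w.re ≤ R → c ≤ ‖numFactor a w‖ := by
  set K := {w : ℂ | |w.im| ≤ w.re ∧ w.re ≤ R}
  have hK_re (w : ℂ) (hw : w ∈ K) : w = 0 ∨ 0 < w.re :=
    or_iff_not_imp_left.2 (re_pos_of_abs_im_le_re hw.1)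
  have hK_add_one (w : ℂ) (hw : w ∈ K) : w + 1 ≠ 0 := by
    have hre : (w + 1).re ≠ 0 := by simp only [add_re, one_re]; linarith [(abs_nonneg _).trans hw.1]
    exact fun h => hre (by simp [h])
  let g (w : ℂ) : ℂ := 1 / (w + 1) * sinhRatio a w
  have hg_cont : ContinuousOn (fun w => ‖g w‖) K := by
    intro w hw
    have hinv : ContinuousAt (fun w : ℂ => 1 / (w + 1)) w :=
      continuousAt_const.div (by fun_prop) (hK_add_one w hw)
    have hratio := continuousAt_sinhRatio a ((hK_re w hw).imp_right sinh_ne_zero_of_re_pos)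
    exact (hinv.mul hratio).norm.continuousWithinAt
  have hg_pos (w : ℂ) (hw : w ∈ K) : 0 < ‖g w‖ := by
    refine norm_pos_iff.2 (mul_ne_zero (one_div_ne_zero (hK_add_one w hw)) ?_)
    rcases hK_re w hw with rfl | hre
    · simpa [sinhRatio_zero] using ha.ne'
    · have hw0 : w ≠ 0 := by rintro rfl; simp at hre
      rw [sinhRatio_of_ne_zero _ hw0]
      refine div_ne_zero (sinh_ne_zero_of_re_pos ?_) (sinh_ne_zero_of_re_pos hre)
      simpa using mul_pos ha hre
  obtain ⟨c, hc, hcK⟩ := (isCompact_setOf_abs_im_le_re_le R).exists_forall_le' hg_cont hg_pos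
  refine ⟨c, hc, fun w hw hwR => ?_⟩
  have hw0 : w ≠ 0 := by rintro rfl; simp at hw
  simpa [g, numFactor, sinhRatio_of_ne_zero _ hw0] using hcK w ⟨hw.le, hwR⟩

lemma half_tanh_one_le_norm_denFactor {a : ℝ} (ha : 0 < a) {w : ℂ} (hw : 1 / a + 1 ≤ w.re) :
    Real.tanh 1 / 2 ≤ ‖denFactor a w‖ := by
  have ha_re : 1 ≤ a * w.re := by
    calc (1 : ℝ) ≤ a * (1 / a + 1) := by field_simp; linarith
      _ ≤ a * w.re := by gcongr
  have hw_re : 1 ≤ w.re := by linarith [one_div_pos.2 ha]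
  have hw_norm : 1 ≤ ‖w‖ := hw_re.trans (re_le_norm w)
  have hquot : 1 / 2 ≤ ‖w / (w + 1)‖ := by
    have hpos : 0 < ‖w + 1‖ := lt_of_lt_of_le (by simp; linarith) (re_le_norm (w + 1))
    rw [norm_div, le_div_iff₀ hpos]
    linarith [norm_add_le w 1, norm_one (α := ℂ)]
  have htanh : Real.tanh 1 ≤ ‖tanh (a * w)‖ := by
    have hre : (a * w : ℂ).re = a * w.re := by simp
    calc Real.tanh 1 ≤ Real.tanh (a * w : ℂ).re := Real.tanh_le_tanh (hre ▸ ha_re)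
      _ ≤ ‖tanh (a * w)‖ := tanh_re_le_norm_tanh (by rw [hre]; linarith)
  calc Real.tanh 1 / 2 = 1 / 2 * Real.tanh 1 := by ring
    _ ≤ ‖w / (w + 1)‖ * ‖tanh (a * w)‖ := by
      gcongr
      exact (Real.tanh_pos one_pos).le
    _ = ‖denFactor a w‖ := (norm_mul _ _).symm

lemma exists_pos_le_norm_numFactor_sq_add_norm_denFactor_sq {a : ℝ} (ha : 0 < a) :
    ∃ δ > 0, ∀ w : ℂ, |w.im| < w.re → δ ≤ ‖numFactor a w‖ ^ 2 + ‖denFactor a w‖ ^ 2 := by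
  obtain ⟨c, hc, hnum⟩ := exists_pos_le_norm_numFactor ha (1 / a + 1)
  have hc' : 0 < Real.tanh 1 / 2 := half_pos (Real.tanh_pos one_pos)
  refine ⟨min (c ^ 2) ((Real.tanh 1 / 2) ^ 2), by positivity, fun w hw => ?_⟩
  rcases le_total w.re (1 / a + 1) with hre | hre
  · calc min (c ^ 2) ((Real.tanh 1 / 2) ^ 2) ≤ c ^ 2 := min_le_left _ _
      _ ≤ ‖numFactor a w‖ ^ 2 := by gcongr; exact hnum w hw hre
      _ ≤ _ := le_add_of_nonneg_right (by positivity)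
  · calc min (c ^ 2) ((Real.tanh 1 / 2) ^ 2) ≤ (Real.tanh 1 / 2) ^ 2 := min_le_right _ _
      _ ≤ ‖denFactor a w‖ ^ 2 := by gcongr; exact half_tanh_one_le_norm_denFactor ha hre
      _ ≤ _ := le_add_of_nonneg_left (by positivity)

end

theorem corona_lower_bound (a : ℝ) (ha : a ∈ Set.Ioo (0:ℝ) 1) :
    ∃ δ > 0, ∀ s : ℂ, 0 < s.re →
      ‖(1 / (s ^ ((1:ℂ)/2) + 1)) *
          (Complex.sinh ((a : ℂ) * s ^ ((1:ℂ)/2)) / Complex.sinh (s ^ ((1:ℂ)/2)))‖ ^ 2 +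
        ‖(s ^ ((1:ℂ)/2) / (s ^ ((1:ℂ)/2) + 1)) * Complex.tanh ((a : ℂ) * s ^ ((1:ℂ)/2))‖ ^ 2 ≥ δ := by
  obtain ⟨δ, hδ, hbound⟩ := exists_pos_le_norm_numFactor_sq_add_norm_denFactor_sq ha.1
  refine ⟨δ, hδ, fun s hs => ?_⟩
  rw [one_div 2]
  exact hbound _ (abs_im_cpow_inv_two_lt_re hs)
end

section
/- The map (0,1) ∋ a ↦ g_a ∈ H^∞(Δ) is continuous in the supremum norm, where g_a(z) = (z/(1+z))·tanh(az) on the angular domain Δ = {z : |Arg z| < π/4}. -/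
/-!
On the closed sector `|Im w| ≤ Re w` one has `‖cosh w‖² ≥ cosh² (Re w) / 2`, because
`|sin (Im w)| ≤ sinh (Re w)` there. Hence `cosh` has no zeros and `‖w‖ ≤ 4 ‖cosh w‖²` on the
sector, so the derivative `∂ₐ tanh (a z) = z / cosh² (a z)` is bounded by `4 / a`. By the mean
value theorem `a ↦ tanh (a z)` is Lipschitz on every half-line `[m, ∞)`, `m > 0`, uniformly
in `z`, while the factor `z / (1 + z)` has modulus at most `1` on the right half-plane.
-/

open Complex
open scoped Real

lemma Real.abs_sin_le_cos {θ : ℝ} (hθ : |θ| ≤ π / 4) : |Real.sin θ| ≤ Real.cos θ := by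
  have sin_le_cos : ∀ φ : ℝ, |φ| ≤ π / 4 → Real.sin φ ≤ Real.cos φ := fun φ hφ => by
    rw [← Real.cos_abs, ← Real.sin_pi_div_two_sub]
    obtain ⟨h₁, h₂⟩ := abs_le.1 hφ
    apply Real.sin_le_sin_of_le_of_le_pi_div_two <;> linarith [abs_nonneg φ, le_abs_self φ]
  refine abs_le.2 ⟨?_, sin_le_cos θ hθ⟩
  simpa [neg_le] using sin_le_cos (-θ) (by rwa [abs_neg])

lemma Complex.abs_im_le_re_of_abs_arg_le {z : ℂ} (hz : |z.arg| ≤ π / 4) : |z.im| ≤ z.re := by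
  rw [← norm_mul_sin_arg, ← norm_mul_cos_arg, abs_mul, abs_norm]
  exact mul_le_mul_of_nonneg_left (Real.abs_sin_le_cos hz) (norm_nonneg z)

lemma Complex.norm_div_one_add_le_one {z : ℂ} (hz : -1 / 2 ≤ z.re) : ‖z / (1 + z)‖ ≤ 1 := by
  rw [norm_div]
  refine div_le_one_of_le₀ ?_ (norm_nonneg _)
  rw [← sq_le_sq₀ (norm_nonneg _) (norm_nonneg _), Complex.sq_norm, Complex.sq_norm,
    normSq_apply, normSq_apply]
  simp only [add_re, add_im, one_re, one_im, zero_add]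
  nlinarith

lemma Complex.normSq_cosh_s13 (w : ℂ) :
    normSq (cosh w) = Real.sinh w.re ^ 2 + Real.cos w.im ^ 2 := by
  have hcosh : cosh w = (Real.cosh w.re * Real.cos w.im : ℝ)
      + (Real.sinh w.re * Real.sin w.im : ℝ) * I := by
    conv_lhs => rw [← re_add_im w]
    rw [cosh_add, cosh_mul_I, sinh_mul_I]
    push_cast
    ring
  rw [hcosh, normSq_add_mul_I]
  nlinarith [Real.cosh_sq w.re, Real.sin_sq_add_cos_sq w.im]

lemma Complex.cosh_re_sq_le_two_mul_norm_cosh_sq {w : ℂ} (hw : |w.im| ≤ |w.re|) :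
    Real.cosh w.re ^ 2 ≤ 2 * ‖cosh w‖ ^ 2 := by
  have hsin : |Real.sin w.im| ≤ |Real.sinh w.re| :=
    calc |Real.sin w.im| ≤ |w.im| := Real.abs_sin_le_abs
      _ ≤ |w.re| := hw
      _ ≤ |Real.sinh w.re| := by
        rw [Real.abs_sinh]; exact Real.self_le_sinh_iff.2 (abs_nonneg _)
  rw [Complex.sq_norm, normSq_cosh_s13, Real.cosh_sq]
  nlinarith [sq_le_sq.2 hsin, Real.sin_sq_add_cos_sq w.im]

lemma Complex.cosh_ne_zero_of_abs_im_le_abs_re {w : ℂ} (hw : |w.im| ≤ |w.re|) : cosh w ≠ 0 := by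
  intro h
  have := cosh_re_sq_le_two_mul_norm_cosh_sq hw
  rw [h, norm_zero] at this
  nlinarith [Real.one_le_cosh w.re]

lemma Complex.norm_le_four_mul_norm_cosh_sq {w : ℂ} (hw : |w.im| ≤ w.re) :
    ‖w‖ ≤ 4 * ‖cosh w‖ ^ 2 := by
  have hre : 0 ≤ w.re := (abs_nonneg _).trans hw
  have hcosh := cosh_re_sq_le_two_mul_norm_cosh_sq (hw.trans (le_abs_self _))
  have hre_le : w.re ≤ Real.cosh w.re ^ 2 :=
    calc w.re ≤ Real.sinh w.re := Real.self_le_sinh_iff.2 hre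
      _ ≤ Real.cosh w.re := (Real.sinh_lt_cosh _).le
      _ ≤ Real.cosh w.re ^ 2 := by nlinarith [Real.one_le_cosh w.re]
  calc ‖w‖ ≤ |w.re| + |w.im| := norm_le_abs_re_add_abs_im w
    _ ≤ 4 * ‖cosh w‖ ^ 2 := by rw [abs_of_nonneg hre]; linarith

lemma Complex.hasDerivAt_tanh {w : ℂ} (hw : cosh w ≠ 0) :
    HasDerivAt tanh (1 / cosh w ^ 2) w := by
  have hquot := (hasDerivAt_sinh w).div (hasDerivAt_cosh w) hw
  have htanh : tanh = sinh / cosh := funext tanh_eq_sinh_div_cosh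
  rw [htanh]
  refine hquot.congr_deriv ?_
  rw [← cosh_sq_sub_sinh_sq w]
  ring

lemma Complex.norm_tanh_mul_sub_tanh_mul_le {z : ℂ} (hz : |z.im| ≤ z.re) {m a b : ℝ}
    (hm : 0 < m) (ha : m ≤ a) (hb : m ≤ b) :
    ‖tanh (a * z) - tanh (b * z)‖ ≤ 4 / m * |a - b| := by
  have hsector : ∀ t : ℝ, 0 ≤ t → |((t : ℂ) * z).im| ≤ ((t : ℂ) * z).re := fun t ht => by
    simp only [re_ofReal_mul, im_ofReal_mul, abs_mul, abs_of_nonneg ht]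
    exact mul_le_mul_of_nonneg_left hz ht
  have hderiv : ∀ t ∈ Set.Ici m,
      HasDerivWithinAt (fun t : ℝ => tanh (t * z)) (z / cosh (t * z) ^ 2) (Set.Ici m) t := by
    intro t ht
    have hcosh := cosh_ne_zero_of_abs_im_le_abs_re
      ((hsector t (hm.le.trans ht)).trans (le_abs_self _))
    have hlin : HasDerivAt (fun t : ℝ => (t : ℂ) * z) z t := by
      simpa using (hasDerivAt_id t).ofReal_comp.mul_const z
    refine ((hasDerivAt_tanh hcosh).comp t hlin).hasDerivWithinAt.congr_deriv ?_
    ring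
  have hbound : ∀ t ∈ Set.Ici m, ‖z / cosh (t * z) ^ 2‖ ≤ 4 / m := by
    intro t (ht : m ≤ t)
    have ht0 : 0 < t := hm.trans_le ht
    have hcosh := norm_le_four_mul_norm_cosh_sq (hsector t ht0.le)
    rw [norm_mul, norm_real, Real.norm_of_nonneg ht0.le] at hcosh
    rw [norm_div, norm_pow]
    refine div_le_of_le_mul₀ (by positivity) (by positivity) ?_
    rw [div_mul_eq_mul_div, le_div_iff₀ hm]
    nlinarith [mul_le_mul_of_nonneg_right ht (norm_nonneg z)]
  simpa [← Complex.ofReal_sub] using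
    (convex_Ici m).norm_image_sub_le_of_norm_hasDerivWithin_le hderiv hbound hb ha

theorem ga_continuous_in_a (a₀ : ℝ) (ha₀ : a₀ ∈ Set.Ioo (0:ℝ) 1) :
    ∀ ε > 0, ∃ δ > 0, ∀ a ∈ Set.Ioo (0:ℝ) 1, |a - a₀| < δ →
      ∀ z : ℂ, |z.arg| < Real.pi / 4 →
        ‖z / (1 + z) * Complex.tanh ((a : ℂ) * z) -
          z / (1 + z) * Complex.tanh ((a₀ : ℂ) * z)‖ < ε := by
  obtain ⟨ha₀_pos, -⟩ := ha₀
  intro ε hε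
  refine ⟨min (a₀ / 2) (a₀ * ε / 8), by positivity, fun a _ hδ z hz => ?_⟩
  have hsector : |z.im| ≤ z.re := abs_im_le_re_of_abs_arg_le hz.le
  have ha : a₀ / 2 ≤ a := by
    linarith [(abs_sub_lt_iff.1 (hδ.trans_le (min_le_left _ _))).2]
  have hclose : |a - a₀| < a₀ * ε / 8 := hδ.trans_le (min_le_right _ _)
  calc ‖z / (1 + z) * tanh (a * z) - z / (1 + z) * tanh (a₀ * z)‖
      = ‖z / (1 + z)‖ * ‖tanh (a * z) - tanh (a₀ * z)‖ := by rw [← mul_sub, norm_mul]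
    _ ≤ 1 * (4 / (a₀ / 2) * |a - a₀|) :=
        mul_le_mul (norm_div_one_add_le_one (by linarith [(abs_nonneg z.im).trans hsector]))
          (norm_tanh_mul_sub_tanh_mul_le hsector (half_pos ha₀_pos) ha (half_le_self ha₀_pos.le))
          (norm_nonneg _) zero_le_one
    _ < 1 * (4 / (a₀ / 2) * (a₀ * ε / 8)) := by gcongr
    _ = ε := by field_simp; ring
end
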